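/- Let P = (D_A, D_B, Φ, B) be an MBSD instance with target mapping specification Φ = ⋀_{i=1}^k (◇φ_i → ◇ψ_i), where each φ_i is a Boolean formula over Prop^A and each ψ_i is a Boolean formula over Prop^B, and stop agent B. Let G_P = (𝒜, Reach(g)) be the memory-augmented reachability game: M = ({0,1}²)^k with generic element [cd] = ((c_1,d_1),...,(c_k,d_k)); U = V = S × T × M; u0 = (s0, t0, [cd]) with c_i = 1 iff λ^A(s0) ⊨ φ_i and d_i = 1 iff λ^B(t0) ⊨ ψ_i; ((s,t,[cd]),(s',t,[c'd])) ∈ α iff (s,s') ∈ δ^A and, for each i, c'_i = 1 if λ^A(s') ⊨ φ_i and c'_i = c_i otherwise; ((s,t,[cd]),(s,t',[cd'])) ∈ β iff (t,t') ∈ δ^B and, for each i, d'_i = 1 if λ^B(t') ⊨ ψ_i and d'_i = d_i otherwise; g = {(s,t,[cd]) ∈ U : for every i, c_i = 0 or d_i = 1}. Then P has a solution if and only if Player 2 has a winning strategy in G_P. -/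

import Mathlib

/-! ### Boolean formulas -/

inductive BForm (P : Type) : Type
  | tt : BForm P
  | atom : P → BForm P
  | neg : BForm P → BForm P
  | conj : BForm P → BForm P → BForm P

namespace BForm

/-- Satisfaction of a Boolean formula by the set `X` of true propositions. -/
def sat {P : Type} (X : Set P) : BForm P → Prop
  | .tt => True
  | .atom p => p ∈ X
  | .neg φ => ¬ sat X φ
  | .conj φ ψ => sat X φ ∧ sat X ψ

def imp {P : Type} (φ ψ : BForm P) : BForm P := .neg (.conj φ (.neg ψ))

def map {P Q : Type} (f : P → Q) : BForm P → BForm Q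
  | .tt => .tt
  | .atom p => .atom (f p)
  | .neg φ => .neg (map f φ)
  | .conj φ ψ => .conj (map f φ) (map f ψ)

end BForm

/-! ### LTLf formulas and finite-word semantics -/

inductive LTLf (P : Type) : Type
  | tt : LTLf P
  | atom : P → LTLf P
  | neg : LTLf P → LTLf P
  | conj : LTLf P → LTLf P → LTLf P
  | next : LTLf P → LTLf P
  | untl : LTLf P → LTLf P → LTLf P

namespace LTLf

/-- Satisfaction on the finite word `π 0, …, π n` at position `i`. -/
def sat {P : Type} (π : ℕ → Set P) (n : ℕ) : ℕ → LTLf P → Prop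
  | _, .tt => True
  | i, .atom p => p ∈ π i
  | i, .neg φ => ¬ sat π n i φ
  | i, .conj φ ψ => sat π n i φ ∧ sat π n i ψ
  | i, .next φ => i + 1 ≤ n ∧ sat π n (i + 1) φ
  | i, .untl φ ψ => ∃ j, i ≤ j ∧ j ≤ n ∧ sat π n j ψ ∧ ∀ m, i ≤ m → m < j → sat π n m φ

def disj {P : Type} (φ ψ : LTLf P) : LTLf P := .neg (.conj (.neg φ) (.neg ψ))
def imp {P : Type} (φ ψ : LTLf P) : LTLf P := disj (.neg φ) ψ
def ev {P : Type} (φ : LTLf P) : LTLf P := .untl .tt φ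
def always {P : Type} (φ : LTLf P) : LTLf P := .neg (ev (.neg φ))
/-- Finite conjunction `⋀_{i=1}^k f i`. -/
def iconj {P : Type} {k : ℕ} (f : Fin k → LTLf P) : LTLf P :=
  ((List.finRange k).map f).foldr .conj .tt

end LTLf

def BForm.toLTLf {P : Type} : BForm P → LTLf P
  | .tt => .tt
  | .atom p => .atom p
  | .neg φ => .neg φ.toLTLf
  | .conj φ ψ => .conj φ.toLTLf ψ.toLTLf

/-! ### Dynamic domains, traces, strategies, solutions -/

structure DynDom (P S : Type) where
  init : S
  δ : S → S → Prop
  label : S → Set P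

/-- `τ 0 … τ n` is a (finite) trace of `D`. -/
def IsTrace {P S : Type} (D : DynDom P S) (τ : ℕ → S) (n : ℕ) : Prop :=
  τ 0 = D.init ∧ ∀ i, i < n → D.δ (τ i) (τ (i + 1))

def IsInfTrace {P S : Type} (D : DynDom P S) (τ : ℕ → S) : Prop :=
  τ 0 = D.init ∧ ∀ i, D.δ (τ i) (τ (i + 1))

/-- The prefix `τ 0 … τ j` as a list. -/
def pref {S : Type} (τ : ℕ → S) (j : ℕ) : List S := (List.range (j + 1)).map τ

/-- The trace induced by a strategy `σ : S⁺ → T` on a trace of the `A`-domain. -/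
def induced {S T : Type} (σ : List S → T) (τ : ℕ → S) : ℕ → T := fun i => σ (pref τ i)

def Executable {PA PB S T : Type} (DA : DynDom PA S) (DB : DynDom PB T)
    (σ : List S → T) : Prop :=
  σ [DA.init] = DB.init ∧ ∀ τ n, IsTrace DA τ n → IsTrace DB (induced σ τ) n

/-- Joint label of a pair of label sets, over the disjoint union of the propositions. -/
def jset {PA PB : Type} (XA : Set PA) (XB : Set PB) : Set (PA ⊕ PB) :=
  Sum.inl '' XA ∪ Sum.inr '' XB

/-- Joint trace label of two (equally long) traces. -/
def jointLabel {PA PB S T : Type} (lA : S → Set PA) (lB : T → Set PB)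
    (τ : ℕ → S) (τ' : ℕ → T) : ℕ → Set (PA ⊕ PB) :=
  fun i => jset (lA (τ i)) (lB (τ' i))

/-- Solution when the stop agent is `A`. -/
def IsSolutionA {PA PB S T : Type} (DA : DynDom PA S) (DB : DynDom PB T)
    (Φ : LTLf (PA ⊕ PB)) (σ : List S → T) : Prop :=
  Executable DA DB σ ∧ ∀ τ n, IsTrace DA τ n →
    LTLf.sat (jointLabel DA.label DB.label τ (induced σ τ)) n 0 Φ

/-- Solution when the stop agent is `B`. -/
def IsSolutionB {PA PB S T : Type} (DA : DynDom PA S) (DB : DynDom PB T)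
    (Φ : LTLf (PA ⊕ PB)) (σ : List S → T) : Prop :=
  Executable DA DB σ ∧ ∀ τ, IsInfTrace DA τ → ∃ n,
    LTLf.sat (jointLabel DA.label DB.label τ (induced σ τ)) n 0 Φ

/-! ### Two-player games -/

structure Arena (N : Type) where
  u0 : N
  alpha : N → N → Prop
  beta : N → N → Prop

def IsPrePlay {N : Type} (A : Arena N) (ρ : ℕ → N) (n : ℕ) : Prop :=
  ρ 0 = A.u0 ∧ ∀ i, i < n →
    (Even i → A.alpha (ρ i) (ρ (i + 1))) ∧ (¬ Even i → A.beta (ρ i) (ρ (i + 1)))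

/-- A play `ρ 0 … ρ n` (with `n` even, ending in a `P1` node). -/
def IsPlay {N : Type} (A : Arena N) (ρ : ℕ → N) (n : ℕ) : Prop :=
  Even n ∧ IsPrePlay A ρ n

/-- The `P2` (V-) nodes of the prefix `ρ 0 … ρ i`, i.e. `ρ 1, ρ 3, …`. -/
def vlist {N : Type} (ρ : ℕ → N) (i : ℕ) : List N :=
  (List.range ((i + 1) / 2)).map fun j => ρ (2 * j + 1)

def Compatible {N : Type} (A : Arena N) (σ' : List N → N) (ρ : ℕ → N) (n : ℕ) : Prop :=
  ∀ i, i < n → ¬ Even i → ρ (i + 1) = σ' (vlist ρ i)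

/-- A `P2` strategy only prescribes legal moves (along plays compatible with it). -/
def StratLegal {N : Type} (A : Arena N) (σ' : List N → N) : Prop :=
  ∀ ρ n, ¬ Even n → IsPrePlay A ρ n → Compatible A σ' ρ n →
    A.beta (ρ n) (σ' (vlist ρ n))

def IsInfPlay {N : Type} (A : Arena N) (ρ : ℕ → N) : Prop :=
  ρ 0 = A.u0 ∧ ∀ i,
    (Even i → A.alpha (ρ i) (ρ (i + 1))) ∧ (¬ Even i → A.beta (ρ i) (ρ (i + 1)))

def CompatibleInf {N : Type} (A : Arena N) (σ' : List N → N) (ρ : ℕ → N) : Prop :=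
  ∀ i, ¬ Even i → ρ (i + 1) = σ' (vlist ρ i)

/-- Winning strategy for the safety objective `Safe(g)`. -/
def WinningSafe {N : Type} (A : Arena N) (g : Set N) (σ' : List N → N) : Prop :=
  StratLegal A σ' ∧ ∀ ρ n, IsPlay A ρ n → Compatible A σ' ρ n →
    ∀ j, j ≤ n → Even j → ρ j ∈ g

/-- Winning strategy for the reachability objective `Reach(g)`:
no matter how `P1` keeps moving, a goal node is eventually reached. -/
def WinningReach {N : Type} (A : Arena N) (g : Set N) (σ' : List N → N) : Prop :=
  StratLegal A σ' ∧ ∀ ρ, IsInfPlay A ρ → CompatibleInf A σ' ρ →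
    ∃ j, Even j ∧ ρ j ∈ g

/-! ### The product arena of the two domains -/

def prodArena {PA PB S T : Type} (DA : DynDom PA S) (DB : DynDom PB T) :
    Arena (S × T) where
  u0 := (DA.init, DB.init)
  alpha := fun u v => DA.δ u.1 v.1 ∧ v.2 = u.2
  beta := fun v u => u.1 = v.1 ∧ DB.δ v.2 u.2

/-! ### Mapping specifications -/

/-- Point-wise mapping specification `⋀_{i} □(φ_i → ψ_i)`. -/
def pointwiseSpec {PA PB : Type} {k : ℕ} (φ : Fin k → BForm PA) (ψ : Fin k → BForm PB) :
    LTLf (PA ⊕ PB) :=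
  LTLf.iconj fun i =>
    LTLf.always (LTLf.imp ((φ i).map Sum.inl).toLTLf ((ψ i).map Sum.inr).toLTLf)

/-- Target mapping specification `⋀_{i} (◇φ_i → ◇ψ_i)`. -/
def targetSpec {PA PB : Type} {k : ℕ} (φ : Fin k → BForm PA) (ψ : Fin k → BForm PB) :
    LTLf (PA ⊕ PB) :=
  LTLf.iconj fun i =>
    LTLf.imp (LTLf.ev ((φ i).map Sum.inl).toLTLf) (LTLf.ev ((ψ i).map Sum.inr).toLTLf)

/-! ### The memory-augmented arena for target mappings -/

def memArena {PA PB S T : Type} {k : ℕ} (DA : DynDom PA S) (DB : DynDom PB T)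
    (φ : Fin k → BForm PA) (ψ : Fin k → BForm PB) :
    Arena (S × T × (Fin k → Prop × Prop)) where
  u0 := (DA.init, DB.init,
    fun i => ((φ i).sat (DA.label DA.init), (ψ i).sat (DB.label DB.init)))
  alpha := fun u v => DA.δ u.1 v.1 ∧ v.2.1 = u.2.1 ∧
    v.2.2 = fun i => ((φ i).sat (DA.label v.1) ∨ (u.2.2 i).1, (u.2.2 i).2)
  beta := fun v u => u.1 = v.1 ∧ DB.δ v.2.1 u.2.1 ∧
    u.2.2 = fun i => ((v.2.2 i).1, (ψ i).sat (DB.label u.2.1) ∨ (v.2.2 i).2)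

/-- `g`: for every `i`, `c_i = 0` or `d_i = 1`. -/
def memGoal {S T : Type} {k : ℕ} : Set (S × T × (Fin k → Prop × Prop)) :=
  {u | ∀ i, (u.2.2 i).1 → (u.2.2 i).2}

/-! ### The DFA-product arena for general LTLf mappings -/

/-- The word `π 0 … π n` as a list. -/
def wordOf {P : Type} (π : ℕ → Set P) (n : ℕ) : List (Set P) := (List.range (n + 1)).map π

def dfaArena {PA PB S T Q : Type} (DA : DynDom PA S) (DB : DynDom PB T)
    (F : DFA (Set (PA ⊕ PB)) Q) : Arena (S × T × Q) where
  u0 := (DA.init, DB.init, F.step F.start (jset (DA.label DA.init) (DB.label DB.init)))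
  alpha := fun u v => DA.δ u.1 v.1 ∧ v.2.1 = u.2.1 ∧ v.2.2 = u.2.2
  beta := fun v u => u.1 = v.1 ∧ DB.δ v.2.1 u.2.1 ∧
    u.2.2 = F.step v.2.2 (jset (DA.label v.1) (DB.label u.2.1))

def dfaGoal {S T α Q : Type} (F : DFA α Q) : Set (S × T × Q) :=
  {u | u.2.2 ∈ F.accept}

/-! A play of the memory arena is determined by an `A`-trace (the moves of `P1`) and a
`B`-trace (the moves of `P2`), and by induction the memory at round `n` records, for each `i`,
whether `φ i` has held on the `A`-prefix and `ψ i` on the `B`-prefix of length `n`. Hence the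
play is in `memGoal` at round `n` exactly when the joint prefix satisfies the target
specification. A solution `σ` becomes a `P2` strategy that answers with `σ` of the `A`-states
played so far; conversely, a winning `P2` strategy gives a solution that simulates the play
against the given `A`-prefix and reads off the `B`-component of the current node. -/

namespace BForm

theorem sat_map_inl {PA PB : Type} (XA : Set PA) (XB : Set PB) (b : BForm PA) :
    (b.map Sum.inl).sat (jset XA XB) ↔ b.sat XA := by
  induction b with
  | atom p => simp [map, sat, jset]
  | _ => simp [map, sat, *]

theorem sat_map_inr {PA PB : Type} (XA : Set PA) (XB : Set PB) (b : BForm PB) :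
    (b.map Sum.inr).sat (jset XA XB) ↔ b.sat XB := by
  induction b with
  | atom p => simp [map, sat, jset]
  | _ => simp [map, sat, *]

end BForm

namespace LTLf

variable {P : Type} (π : ℕ → Set P) (n i : ℕ)

theorem sat_toLTLf (b : BForm P) : sat π n i b.toLTLf ↔ b.sat (π i) := by
  induction b <;> simp [BForm.toLTLf, sat, BForm.sat, *]

theorem sat_imp (φ ψ : LTLf P) : sat π n i (imp φ ψ) ↔ (sat π n i φ → sat π n i ψ) := by
  simp only [imp, disj, sat]
  tauto

theorem sat_ev (φ : LTLf P) : sat π n i (ev φ) ↔ ∃ j, i ≤ j ∧ j ≤ n ∧ sat π n j φ := by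
  simp [ev, sat]

theorem sat_iconj {k : ℕ} (f : Fin k → LTLf P) : sat π n i (iconj f) ↔ ∀ j, sat π n i (f j) := by
  suffices ∀ l : List (LTLf P), sat π n i (l.foldr .conj .tt) ↔ ∀ x ∈ l, sat π n i x by
    simp [iconj, this]
  intro l
  induction l <;> simp [sat, *]

end LTLf

theorem sat_targetSpec {PA PB S T : Type} {k : ℕ} (φ : Fin k → BForm PA) (ψ : Fin k → BForm PB)
    (lA : S → Set PA) (lB : T → Set PB) (τ : ℕ → S) (τ' : ℕ → T) (n : ℕ) :
    LTLf.sat (jointLabel lA lB τ τ') n 0 (targetSpec φ ψ) ↔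
      ∀ i, (∃ j ≤ n, (φ i).sat (lA (τ j))) → ∃ j ≤ n, (ψ i).sat (lB (τ' j)) := by
  simp [targetSpec, LTLf.sat_iconj, LTLf.sat_imp, LTLf.sat_ev, LTLf.sat_toLTLf, jointLabel,
    BForm.sat_map_inl, BForm.sat_map_inr]

theorem isInfTrace_iff {P S : Type} {D : DynDom P S} {τ : ℕ → S} :
    IsInfTrace D τ ↔ ∀ n, IsTrace D τ n :=
  ⟨fun h _ => ⟨h.1, fun i _ => h.2 i⟩, fun h => ⟨(h 0).1, fun i => (h (i + 1)).2 i i.lt_succ_self⟩⟩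

theorem IsTrace.mono {P S : Type} {D : DynDom P S} {τ : ℕ → S} {m n : ℕ} (h : IsTrace D τ n)
    (hmn : m ≤ n) : IsTrace D τ m :=
  ⟨h.1, fun i hi => h.2 i (by omega)⟩

section Arena

variable {N : Type} {A : Arena N} {ρ : ℕ → N} {σ' : List N → N} {m n : ℕ}

theorem IsPrePlay.mono (h : IsPrePlay A ρ n) (hmn : m ≤ n) : IsPrePlay A ρ m :=
  ⟨h.1, fun i hi => h.2 i (by omega)⟩

theorem isPrePlay_succ_iff : IsPrePlay A ρ (n + 1) ↔ IsPrePlay A ρ n ∧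
    (Even n → A.alpha (ρ n) (ρ (n + 1))) ∧ (¬ Even n → A.beta (ρ n) (ρ (n + 1))) := by
  refine ⟨fun h => ⟨h.mono n.le_succ, h.2 n n.lt_succ_self⟩, fun ⟨h, hn⟩ => ⟨h.1, fun i hi => ?_⟩⟩
  rcases Nat.lt_succ_iff_lt_or_eq.1 hi with hi | rfl
  exacts [h.2 i hi, hn]

theorem IsPrePlay.alpha_even (h : IsPrePlay A ρ n) (hm : 2 * m < n) :
    A.alpha (ρ (2 * m)) (ρ (2 * m + 1)) :=
  (h.2 _ hm).1 (even_two_mul m)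

theorem IsPrePlay.beta_odd (h : IsPrePlay A ρ n) (hm : 2 * m + 1 < n) :
    A.beta (ρ (2 * m + 1)) (ρ (2 * (m + 1))) :=
  (h.2 _ hm).2 (Nat.not_even_two_mul_add_one m)

theorem isInfPlay_iff : IsInfPlay A ρ ↔ ∀ n, IsPrePlay A ρ n :=
  ⟨fun h _ => ⟨h.1, fun i _ => h.2 i⟩, fun h => ⟨(h 0).1, fun i => (h (i + 1)).2 i i.lt_succ_self⟩⟩

theorem Compatible.mono (h : Compatible A σ' ρ n) (hmn : m ≤ n) : Compatible A σ' ρ m :=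
  fun i hi => h i (by omega)

theorem CompatibleInf.compatible (h : CompatibleInf A σ' ρ) (n : ℕ) : Compatible A σ' ρ n :=
  fun i _ => h i

theorem vlist_two_mul_add_one (ρ : ℕ → N) (m : ℕ) :
    vlist ρ (2 * m + 1) = (List.range (m + 1)).map fun j => ρ (2 * j + 1) := by
  rw [vlist, show (2 * m + 1 + 1) / 2 = m + 1 by omega]

end Arena

section MemArena

variable {PA PB S T : Type} {k : ℕ} (DA : DynDom PA S) (DB : DynDom PB T)
  (φ : Fin k → BForm PA) (ψ : Fin k → BForm PB)

def aMove (u : S × T × (Fin k → Prop × Prop)) (s : S) : S × T × (Fin k → Prop × Prop) :=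
  (s, u.2.1, fun i => ((φ i).sat (DA.label s) ∨ (u.2.2 i).1, (u.2.2 i).2))

def bMove (v : S × T × (Fin k → Prop × Prop)) (t : T) : S × T × (Fin k → Prop × Prop) :=
  (v.1, t, fun i => ((v.2.2 i).1, (ψ i).sat (DB.label t) ∨ (v.2.2 i).2))

def aTrace (ρ : ℕ → S × T × (Fin k → Prop × Prop)) : ℕ → S
  | 0 => DA.init
  | j + 1 => (ρ (2 * j + 1)).1

variable {DA DB φ ψ} {ρ : ℕ → S × T × (Fin k → Prop × Prop)} {m n : ℕ}

theorem IsPrePlay.fst_even (h : IsPrePlay (memArena DA DB φ ψ) ρ (2 * m)) :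
    (ρ (2 * m)).1 = aTrace DA ρ m := by
  cases m with
  | zero => rw [h.1]; rfl
  | succ m => exact (h.beta_odd (m := m) (by omega)).1

theorem IsPrePlay.memory_even (h : IsPrePlay (memArena DA DB φ ψ) ρ (2 * m)) :
    (ρ (2 * m)).2.2 = fun i => (∃ j ≤ m, (φ i).sat (DA.label (ρ (2 * j)).1),
      ∃ j ≤ m, (ψ i).sat (DB.label (ρ (2 * j)).2.1)) := by
  induction m with
  | zero => simp [h.1, memArena]
  | succ m ih =>
    obtain ⟨-, -, hα⟩ := h.alpha_even (m := m) (by omega)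
    obtain ⟨hs, -, hβ⟩ := h.beta_odd (m := m) (by omega)
    rw [hβ, hα, ih (h.mono (by omega))]
    funext i
    simp only [Nat.le_succ_iff, or_and_right, exists_or, exists_eq_left, hs,
      Nat.succ_eq_add_one, or_comm]

theorem IsPrePlay.mem_memGoal_iff (h : IsPrePlay (memArena DA DB φ ψ) ρ (2 * n))
    {τ : ℕ → S} {τ' : ℕ → T} (hτ : ∀ j ≤ n, (ρ (2 * j)).1 = τ j)
    (hτ' : ∀ j ≤ n, (ρ (2 * j)).2.1 = τ' j) :
    ρ (2 * n) ∈ memGoal ↔ LTLf.sat (jointLabel DA.label DB.label τ τ') n 0 (targetSpec φ ψ) := by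
  rw [sat_targetSpec, memGoal, Set.mem_ofPred_eq, h.memory_even]
  refine forall_congr' fun i => imp_congr ?_ ?_ <;>
    refine exists_congr fun j => and_congr_right fun hj => ?_
  · rw [hτ j hj]
  · rw [hτ' j hj]

end MemArena

section SolutionToStrategy

variable {PA PB S T : Type} {k : ℕ} (DA : DynDom PA S) (DB : DynDom PB T)
  (φ : Fin k → BForm PA) (ψ : Fin k → BForm PB)

def strategyOfSolution (σ : List S → T) (l : List (S × T × (Fin k → Prop × Prop))) :
    S × T × (Fin k → Prop × Prop) :=
  bMove DB ψ (l.getLastD (memArena DA DB φ ψ).u0) (σ (DA.init :: l.map Prod.fst))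

variable {DA DB φ ψ} {σ : List S → T} {ρ : ℕ → S × T × (Fin k → Prop × Prop)} {m : ℕ}

theorem strategyOfSolution_vlist :
    strategyOfSolution DA DB φ ψ σ (vlist ρ (2 * m + 1)) =
      bMove DB ψ (ρ (2 * m + 1)) (σ (pref (aTrace DA ρ) (m + 1))) := by
  rw [strategyOfSolution, vlist_two_mul_add_one, pref, List.range_succ_eq_map (n := m + 1)]
  simp [List.range_succ, aTrace, Function.comp_def]

theorem IsPrePlay.isTrace_aTrace (h : IsPrePlay (memArena DA DB φ ψ) ρ (2 * m + 1)) :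
    IsTrace DA (aTrace DA ρ) (m + 1) := by
  refine ⟨rfl, fun j hj => ?_⟩
  rw [← (h.mono (m := 2 * j) (by omega)).fst_even]
  exact (h.alpha_even (by omega)).1

theorem snd_even_eq_induced (hσ : σ [DA.init] = DB.init)
    (h0 : ρ 0 = (memArena DA DB φ ψ).u0)
    (hc : Compatible (memArena DA DB φ ψ) (strategyOfSolution DA DB φ ψ σ) ρ (2 * m))
    {j : ℕ} (hj : j ≤ m) : (ρ (2 * j)).2.1 = induced σ (aTrace DA ρ) j := by
  cases j with
  | zero => rw [h0]; exact hσ.symm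
  | succ j =>
    rw [show 2 * (j + 1) = 2 * j + 1 + 1 by ring,
      hc _ (by omega) (Nat.not_even_two_mul_add_one j), strategyOfSolution_vlist]
    rfl

theorem stratLegal_strategyOfSolution (hσ : Executable DA DB σ) :
    StratLegal (memArena DA DB φ ψ) (strategyOfSolution DA DB φ ψ σ) := by
  intro ρ n hn hρ hc
  obtain ⟨m, rfl⟩ := Nat.not_even_iff_odd.1 hn
  rw [strategyOfSolution_vlist]
  refine ⟨rfl, ?_, rfl⟩
  rw [(hρ.alpha_even (m := m) (by omega)).2.1,
    snd_even_eq_induced hσ.1 hρ.1 (hc.mono (by omega)) le_rfl]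
  exact (hσ.2 _ _ hρ.isTrace_aTrace).2 m m.lt_succ_self

theorem winningReach_strategyOfSolution (hσ : IsSolutionB DA DB (targetSpec φ ψ) σ) :
    WinningReach (memArena DA DB φ ψ) memGoal (strategyOfSolution DA DB φ ψ σ) := by
  refine ⟨stratLegal_strategyOfSolution hσ.1, fun ρ hρ hc => ?_⟩
  have hpre := isInfPlay_iff.1 hρ
  have hτ : IsInfTrace DA (aTrace DA ρ) :=
    isInfTrace_iff.2 fun n => (hpre (2 * n + 1)).isTrace_aTrace.mono n.le_succ
  obtain ⟨n, hn⟩ := hσ.2 _ hτ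
  refine ⟨2 * n, even_two_mul n, ((hpre _).mem_memGoal_iff (fun j _ => (hpre _).fst_even)
    (fun j hj => snd_even_eq_induced hσ.1.1 hρ.1 (hc.compatible _) hj)).2 hn⟩

end SolutionToStrategy

section StrategyToSolution

variable {PA PB S T : Type} {k : ℕ} (DA : DynDom PA S) (DB : DynDom PB T)
  (φ : Fin k → BForm PA) (ψ : Fin k → BForm PB)

def simulateStep (σ' : List (S × T × (Fin k → Prop × Prop)) → S × T × (Fin k → Prop × Prop))
    (st : (S × T × (Fin k → Prop × Prop)) × List (S × T × (Fin k → Prop × Prop))) (s : S) :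
    (S × T × (Fin k → Prop × Prop)) × List (S × T × (Fin k → Prop × Prop)) :=
  let vs := st.2 ++ [aMove DA φ st.1 s]
  (σ' vs, vs)

/-- `simulate σ' [s₀, …, sₘ]` is the `P1` node reached after `m` rounds of the play in which
`P1` moves to `s₁, …, sₘ` and `P2` follows `σ'`, paired with the `V`-nodes visited so far. -/
def simulate (σ' : List (S × T × (Fin k → Prop × Prop)) → S × T × (Fin k → Prop × Prop))
    (l : List S) : (S × T × (Fin k → Prop × Prop)) × List (S × T × (Fin k → Prop × Prop)) :=
  l.tail.foldl (simulateStep DA φ σ') ((memArena DA DB φ ψ).u0, [])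

def solutionOfStrategy (σ' : List (S × T × (Fin k → Prop × Prop)) → S × T × (Fin k → Prop × Prop))
    (l : List S) : T :=
  (simulate DA DB φ ψ σ' l).1.2.1

def simPlay (σ' : List (S × T × (Fin k → Prop × Prop)) → S × T × (Fin k → Prop × Prop))
    (τ : ℕ → S) (n : ℕ) : S × T × (Fin k → Prop × Prop) :=
  if Even n then (simulate DA DB φ ψ σ' (pref τ (n / 2))).1
  else aMove DA φ (simulate DA DB φ ψ σ' (pref τ (n / 2))).1 (τ (n / 2 + 1))

variable {DA DB φ ψ} {σ' : List (S × T × (Fin k → Prop × Prop)) → S × T × (Fin k → Prop × Prop)}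
  {τ : ℕ → S} {m : ℕ}

theorem simulate_pref_succ :
    simulate DA DB φ ψ σ' (pref τ (m + 1)) =
      simulateStep DA φ σ' (simulate DA DB φ ψ σ' (pref τ m)) (τ (m + 1)) := by
  rw [simulate, simulate, pref, pref, List.range_succ, List.map_append,
    List.tail_append_of_ne_nil (by simp), List.foldl_append]
  rfl

theorem simPlay_two_mul :
    simPlay DA DB φ ψ σ' τ (2 * m) = (simulate DA DB φ ψ σ' (pref τ m)).1 := by
  rw [simPlay, if_pos (even_two_mul m), Nat.mul_div_cancel_left m two_pos]

theorem simPlay_two_mul_add_one :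
    simPlay DA DB φ ψ σ' τ (2 * m + 1) =
      aMove DA φ (simPlay DA DB φ ψ σ' τ (2 * m)) (τ (m + 1)) := by
  rw [simPlay, if_neg (Nat.not_even_two_mul_add_one m), simPlay_two_mul,
    show (2 * m + 1) / 2 = m by omega]

theorem simPlay_zero : simPlay DA DB φ ψ σ' τ 0 = (memArena DA DB φ ψ).u0 :=
  simPlay_two_mul (m := 0)

theorem simulate_pref_snd :
    (simulate DA DB φ ψ σ' (pref τ m)).2 =
      (List.range m).map fun j => simPlay DA DB φ ψ σ' τ (2 * j + 1) := by
  induction m with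
  | zero => rfl
  | succ m ih =>
    rw [simulate_pref_succ, simulateStep, ih, List.range_succ, List.map_append, List.map_singleton,
      simPlay_two_mul_add_one, simPlay_two_mul]

theorem compatibleInf_simPlay :
    CompatibleInf (memArena DA DB φ ψ) σ' (simPlay DA DB φ ψ σ' τ) := by
  intro i hi
  obtain ⟨m, rfl⟩ := Nat.not_even_iff_odd.1 hi
  rw [vlist_two_mul_add_one, ← simulate_pref_snd, show 2 * m + 1 + 1 = 2 * (m + 1) by ring,
    simPlay_two_mul, simulate_pref_succ]
  rfl

theorem aTrace_simPlay (h0 : τ 0 = DA.init) : aTrace DA (simPlay DA DB φ ψ σ' τ) = τ := by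
  funext j
  cases j with
  | zero => exact h0.symm
  | succ j => rw [aTrace, simPlay_two_mul_add_one]; rfl

theorem isPrePlay_simPlay (hσ' : StratLegal (memArena DA DB φ ψ) σ') (hτ : IsTrace DA τ m) :
    IsPrePlay (memArena DA DB φ ψ) (simPlay DA DB φ ψ σ' τ) (2 * m) := by
  induction m with
  | zero => exact ⟨simPlay_zero, by omega⟩
  | succ m ih =>
    have hpre := ih (hτ.mono m.le_succ)
    have hpre' : IsPrePlay (memArena DA DB φ ψ) (simPlay DA DB φ ψ σ' τ) (2 * m + 1) := by
      refine isPrePlay_succ_iff.2 ⟨hpre, fun _ => ?_, fun h => absurd (even_two_mul m) h⟩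
      rw [simPlay_two_mul_add_one]
      refine ⟨?_, rfl, rfl⟩
      rw [hpre.fst_even, aTrace_simPlay hτ.1]
      exact hτ.2 m m.lt_succ_self
    refine isPrePlay_succ_iff.2 ⟨hpre', fun h => absurd h (Nat.not_even_two_mul_add_one m),
      fun hodd => ?_⟩
    rw [compatibleInf_simPlay _ hodd]
    exact hσ' _ _ hodd hpre' (compatibleInf_simPlay.compatible _)

theorem induced_solutionOfStrategy (j : ℕ) :
    induced (solutionOfStrategy DA DB φ ψ σ') τ j = (simPlay DA DB φ ψ σ' τ (2 * j)).2.1 := by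
  rw [induced, solutionOfStrategy, simPlay_two_mul]

theorem executable_solutionOfStrategy (hσ' : StratLegal (memArena DA DB φ ψ) σ') :
    Executable DA DB (solutionOfStrategy DA DB φ ψ σ') := by
  refine ⟨rfl, fun τ n hτ => ⟨?_, fun j hj => ?_⟩⟩
  · rw [induced_solutionOfStrategy, simPlay_two_mul]
    rfl
  · have hpre := isPrePlay_simPlay hσ' hτ
    rw [induced_solutionOfStrategy, induced_solutionOfStrategy,
      ← (hpre.alpha_even (m := j) (by omega)).2.1]
    exact (hpre.beta_odd (by omega)).2.1

theorem isSolutionB_solutionOfStrategy (hσ' : WinningReach (memArena DA DB φ ψ) memGoal σ') :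
    IsSolutionB DA DB (targetSpec φ ψ) (solutionOfStrategy DA DB φ ψ σ') := by
  refine ⟨executable_solutionOfStrategy hσ'.1, fun τ hτ => ?_⟩
  have hpre n := isPrePlay_simPlay (φ := φ) (ψ := ψ) hσ'.1 (isInfTrace_iff.1 hτ n)
  obtain ⟨_, ⟨n, rfl⟩, hgoal⟩ := hσ'.2 _ (isInfPlay_iff.2 fun i => (hpre i).mono (by omega))
    compatibleInf_simPlay
  refine ⟨n, ((hpre n).mem_memGoal_iff (fun j _ => ?_)
    (fun j _ => (induced_solutionOfStrategy j).symm)).1 (by rwa [two_mul])⟩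
  rw [(hpre j).fst_even, aTrace_simPlay hτ.1]

end StrategyToSolution

theorem mbsd_target_iff_reachability_game_general
    {PA PB S T : Type} {k : ℕ}
    (DA : DynDom PA S) (DB : DynDom PB T)
    (φ : Fin k → BForm PA) (ψ : Fin k → BForm PB) :
    (∃ σ : List S → T, IsSolutionB DA DB (targetSpec φ ψ) σ) ↔
      (∃ σ' : List (S × T × (Fin k → Prop × Prop)) → S × T × (Fin k → Prop × Prop),
        WinningReach (memArena DA DB φ ψ) memGoal σ') :=
  ⟨fun ⟨_, hσ⟩ => ⟨_, winningReach_strategyOfSolution hσ⟩,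
    fun ⟨_, hσ'⟩ => ⟨_, isSolutionB_solutionOfStrategy hσ'⟩⟩

/-- the MBSD instance with target mapping specification
`⋀_{i=1}^k (◇φ_i → ◇ψ_i)` and stop agent `B` has a solution iff Player 2 has a winning
strategy in the memory-augmented reachability game. -/
theorem mbsd_target_iff_reachability_game
    {PA PB S T : Type} [Fintype PA] [Fintype PB] [Fintype S] [Fintype T] {k : ℕ}
    (DA : DynDom PA S) (DB : DynDom PB T)
    (hserA : ∀ s, ∃ s', DA.δ s s') (hserB : ∀ t, ∃ t', DB.δ t t')
    (φ : Fin k → BForm PA) (ψ : Fin k → BForm PB) :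
    (∃ σ : List S → T, IsSolutionB DA DB (targetSpec φ ψ) σ) ↔
      (∃ σ' : List (S × T × (Fin k → Prop × Prop)) → S × T × (Fin k → Prop × Prop),
        WinningReach (memArena DA DB φ ψ) memGoal σ') :=
  mbsd_target_iff_reachability_game_general DA DB φ ψ
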